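/- arXiv:2502.01435 — 2 statements merged into one kernel-verified Lean document; each statement's English description precedes it below -/
import Mathlib

section
/- Let G be a graph, U ⊆ V nonempty with an STC-satisfying labeling L, and λ = 0. Let w ∈ U be a vertex maximizing the strong degree deg_s(w,U,L). Then the clique C = {w} ∪ {strong neighbors of w in U} with the all-strong labeling L' satisfies q(C,L';0) = deg_s(w,U,L)/2 ≥ q(U,L;0). -/
open Finset

variable {V : Type*} [Fintype V] [DecidableEq V]

/-- Edges of the subgraph of `G` induced on the vertex set `U`. -/
def inducedEdges (G : SimpleGraph V) [DecidableRel G.Adj] (U : Finset V) : Finset (Sym2 V) :=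
  G.edgeFinset.filter (· ∈ U.sym2)

/-- The strong triadic closure property on `U` for the set `S` of strong edges:
two strong edges sharing an endpoint force adjacency of the other endpoints. -/
def STC (G : SimpleGraph V) (U : Finset V) (S : Finset (Sym2 V)) : Prop :=
  ∀ x y z : V, x ∈ U → y ∈ U → z ∈ U → x ≠ z →
    s(x, y) ∈ S → s(y, z) ∈ S → G.Adj x z

/-- The score q(U,L;λ) = (m_s + λ m_w)/|U|, where `S` is the set of strong edges
and the weak edges are the remaining induced edges. -/
noncomputable def score (G : SimpleGraph V) [DecidableRel G.Adj] (U : Finset V)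
    (S : Finset (Sym2 V)) (lam : ℝ) : ℝ :=
  ((S.card : ℝ) + lam * (((inducedEdges G U) \ S).card : ℝ)) / (U.card : ℝ)

/-- The strong degree of `v`: the number of strong edges incident to `v`. -/
def sdeg (S : Finset (Sym2 V)) (v : V) : ℕ := (S.filter (fun e => v ∈ e)).card

/-! By strong triadic closure any two strong neighbours of `w` are adjacent, so `w` together
with its `deg_s w` strong neighbours is a clique; with every edge strong its score is
`(|C| - 1) / 2 = deg_s w / 2`. On the other side, the handshake identity gives
`q(U, L; 0) = (∑ v ∈ U, deg_s v) / (2 |U|)`, at most half the maximal strong degree. -/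

section

variable {G : SimpleGraph V} [DecidableRel G.Adj] {U : Finset V} {S : Finset (Sym2 V)}

lemma mem_inducedEdges {a b : V} :
    s(a, b) ∈ inducedEdges G U ↔ G.Adj a b ∧ a ∈ U ∧ b ∈ U := by
  simp [inducedEdges]

lemma inducedEdges_eq_image_offDiag_of_isClique {C : Finset V} (hC : G.IsClique (C : Set V)) :
    inducedEdges G C = C.offDiag.image Sym2.mk.uncurry := by
  ext ⟨a, b⟩
  simp only [mem_inducedEdges, Finset.mem_image, Finset.mem_offDiag, Prod.exists,
    Function.uncurry_apply_pair, Sym2.eq_iff]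
  constructor
  · rintro ⟨hab, ha, hb⟩
    exact ⟨a, b, ⟨ha, hb, hab.ne⟩, Or.inl ⟨rfl, rfl⟩⟩
  · rintro ⟨x, y, ⟨hx, hy, hxy⟩, ⟨rfl, rfl⟩ | ⟨rfl, rfl⟩⟩
    · exact ⟨hC hx hy hxy, hx, hy⟩
    · exact ⟨hC hy hx hxy.symm, hy, hx⟩

lemma score_inducedEdges_of_isClique {C : Finset V} (hC : G.IsClique (C : Set V))
    (hne : C.Nonempty) :
    score G C (inducedEdges G C) 0 = ((#C : ℝ) - 1) / 2 := by
  have hpos : (0 : ℝ) < #C := by exact_mod_cast hne.card_pos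
  rw [score, zero_mul, add_zero, inducedEdges_eq_image_offDiag_of_isClique hC,
    Sym2.card_image_offDiag, Nat.cast_choose_two]
  field_simp

lemma sum_sdeg_eq_two_mul_card (hS : S ⊆ inducedEdges G U) :
    ∑ v ∈ U, sdeg S v = 2 * #S := by
  simp_rw [sdeg, card_filter]
  rw [sum_comm, mul_comm, ← smul_eq_mul, ← sum_const]
  refine sum_congr rfl fun e he => ?_
  induction e using Sym2.ind with
  | _ a b =>
  obtain ⟨hab, ha, hb⟩ := mem_inducedEdges.1 (hS he)
  rw [← card_filter]
  have : U.filter (· ∈ s(a, b)) = {a, b} := by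
    ext v
    simp only [mem_filter, Sym2.mem_iff, mem_insert, mem_singleton, and_iff_right_iff_imp]
    rintro (rfl | rfl) <;> assumption
  rw [this, card_pair hab.ne]

lemma score_zero_le_of_sdeg_le (hS : S ⊆ inducedEdges G U) {d : ℕ}
    (hd : ∀ v ∈ U, sdeg S v ≤ d) :
    score G U S 0 ≤ d / 2 := by
  rw [score, zero_mul, add_zero]
  rcases U.eq_empty_or_nonempty with rfl | hU
  · simp only [card_empty, Nat.cast_zero, div_zero]; positivity
  have hsum : 2 * #S ≤ #U * d := by
    rw [← sum_sdeg_eq_two_mul_card hS, ← smul_eq_mul, ← sum_const]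
    exact sum_le_sum hd
  have hpos : (0 : ℝ) < #U := by exact_mod_cast hU.card_pos
  rw [div_le_div_iff₀ hpos two_pos]
  exact_mod_cast (by linarith : #S * 2 ≤ d * #U)

lemma card_filter_mk_mem_eq_sdeg (hS : S ⊆ inducedEdges G U) (w : V) :
    #(U.filter fun v => s(v, w) ∈ S) = sdeg S w := by
  refine card_nbij (fun v => s(v, w)) (fun v hv => ?_) (fun a ha b hb hab => ?_) (fun e he => ?_)
  · exact mem_filter.2 ⟨(mem_filter.1 hv).2, Sym2.mem_mk_right v w⟩
  · obtain ⟨-, haS⟩ := mem_filter.1 ha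
    rcases Sym2.eq_iff.1 hab with ⟨rfl, -⟩ | ⟨rfl, rfl⟩
    · rfl
    · exact (G.irrefl (mem_inducedEdges.1 (hS haS)).1).elim
  · obtain ⟨heS, hwe⟩ := mem_filter.1 he
    induction e using Sym2.ind with
    | _ a b =>
    obtain ⟨-, ha, hb⟩ := mem_inducedEdges.1 (hS heS)
    rcases Sym2.mem_iff.1 hwe with rfl | rfl
    · exact ⟨b, mem_filter.2 ⟨hb, Sym2.eq_swap ▸ heS⟩, Sym2.eq_swap⟩
    · exact ⟨a, mem_filter.2 ⟨ha, heS⟩, rfl⟩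

lemma isClique_insert_filter_mk_mem (hS : S ⊆ inducedEdges G U) (hstc : STC G U S)
    {w : V} (hw : w ∈ U) :
    G.IsClique (insert w (U.filter fun v => s(v, w) ∈ S) : Finset V) := by
  have hadj : ∀ v, v ∈ U ∧ s(v, w) ∈ S → G.Adj w v := fun v hv =>
    (mem_inducedEdges.1 (hS hv.2)).1.symm
  simp only [coe_insert, coe_filter, SimpleGraph.isClique_insert]
  refine ⟨fun x hx y hy hxy => ?_, fun v hv _ => hadj v hv⟩
  exact hstc x w y hx.1 hw hy.1 hxy hx.2 (Sym2.eq_swap ▸ hy.2)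

end

theorem stmt2_general (G : SimpleGraph V) [DecidableRel G.Adj] (U : Finset V)
    (S : Finset (Sym2 V)) (hS : S ⊆ inducedEdges G U) (hstc : STC G U S)
    (w : V) (hw : w ∈ U) (hmax : ∀ v ∈ U, sdeg S v ≤ sdeg S w) :
    score G (insert w (U.filter (fun v => s(v, w) ∈ S)))
        (inducedEdges G (insert w (U.filter (fun v => s(v, w) ∈ S)))) 0
      = (sdeg S w : ℝ) / 2 ∧
    (sdeg S w : ℝ) / 2 ≥ score G U S 0 := by
  have hwN : w ∉ U.filter fun v => s(v, w) ∈ S := fun h =>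
    G.irrefl (mem_inducedEdges.1 (hS (mem_filter.1 h).2)).1
  refine ⟨?_, score_zero_le_of_sdeg_le hS hmax⟩
  rw [score_inducedEdges_of_isClique (isClique_insert_filter_mk_mem hS hstc hw)
    (insert_nonempty _ _), card_insert_of_notMem hwN, card_filter_mk_mem_eq_sdeg hS]
  push_cast
  ring

theorem stmt2 (G : SimpleGraph V) [DecidableRel G.Adj] (U : Finset V) (hU : U.Nonempty)
    (S : Finset (Sym2 V)) (hS : S ⊆ inducedEdges G U) (hstc : STC G U S)
    (w : V) (hw : w ∈ U) (hmax : ∀ v ∈ U, sdeg S v ≤ sdeg S w) :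
    score G (insert w (U.filter (fun v => s(v, w) ∈ S)))
        (inducedEdges G (insert w (U.filter (fun v => s(v, w) ∈ S)))) 0
      = (sdeg S w : ℝ) / 2 ∧
    (sdeg S w : ℝ) / 2 ≥ score G U S 0 :=
  stmt2_general G U S hS hstc w hw hmax
end

section
/- For λ = 0, the optimal value of the problem of maximizing q(U,L;0) over vertex subsets U and STC-satisfying labelings L equals (ω(G)-1)/2, where ω(G) is the maximum clique size of G. -/
open Finset

variable {V : Type*} [Fintype V] [DecidableEq V]

/-!
Under strong triadic closure a vertex of `U` together with its strong neighbours is a clique of `G`,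
so every strong degree is at most `ω(G) - 1`; by the handshake lemma `2 m_s ≤ |U| (ω(G) - 1)`.
A maximum clique with all of its edges strong attains this bound.
-/

open SimpleGraph

section

variable {G : SimpleGraph V} [DecidableRel G.Adj] {U K : Finset V} {S : Finset (Sym2 V)}

@[simp]
lemma mk_mem_inducedEdges {x y : V} :
    s(x, y) ∈ inducedEdges G U ↔ G.Adj x y ∧ x ∈ U ∧ y ∈ U := by
  simp [inducedEdges]

lemma edgeFinset_fromEdgeSet_of_subset_inducedEdges (hS : S ⊆ inducedEdges G U) :
    (fromEdgeSet (S : Set (Sym2 V))).edgeFinset = S := by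
  ext e
  simp only [mem_edgeFinset, edgeSet_fromEdgeSet, Set.mem_sdiff, mem_coe, Sym2.mem_diagSet,
    and_iff_left_iff_imp]
  exact fun he => G.not_isDiag_of_mem_edgeSet (mem_edgeFinset.mp (mem_filter.mp (hS he)).1)

lemma degree_fromEdgeSet_eq_zero_of_notMem (hS : S ⊆ inducedEdges G U) {v : V} (hv : v ∉ U) :
    (fromEdgeSet (S : Set (Sym2 V))).degree v = 0 := by
  rw [degree, card_eq_zero, eq_empty_iff_forall_notMem]
  intro w hw
  rw [mem_neighborFinset, fromEdgeSet_adj] at hw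
  exact hv (mk_mem_inducedEdges.mp (hS hw.1)).2.1

lemma sum_degree_fromEdgeSet (hS : S ⊆ inducedEdges G U) :
    ∑ v ∈ U, (fromEdgeSet (S : Set (Sym2 V))).degree v = 2 * #S := by
  rw [sum_subset (subset_univ U) fun v _ hv => degree_fromEdgeSet_eq_zero_of_notMem hS hv,
    sum_degrees_eq_twice_card_edges]
  congr 2
  convert edgeFinset_fromEdgeSet_of_subset_inducedEdges hS

lemma STC.isClique_insert_neighborFinset (hS : S ⊆ inducedEdges G U) (hSTC : STC G U S)
    {v : V} (hv : v ∈ U) :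
    G.IsClique (↑(insert v ((fromEdgeSet (S : Set (Sym2 V))).neighborFinset v)) : Set V) := by
  rw [coe_insert, isClique_insert]
  refine ⟨fun a ha b hb hab => ?_, fun b hb _ => ?_⟩
  · simp only [mem_coe, mem_neighborFinset, fromEdgeSet_adj] at ha hb
    have hav : s(a, v) ∈ S := Sym2.eq_swap ▸ ha.1
    exact hSTC a v b (mk_mem_inducedEdges.mp (hS hav)).2.1 hv
      (mk_mem_inducedEdges.mp (hS hb.1)).2.2 hab hav hb.1
  · rw [mem_coe, mem_neighborFinset, fromEdgeSet_adj] at hb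
    exact (mk_mem_inducedEdges.mp (hS hb.1)).1

lemma STC.degree_fromEdgeSet_lt_cliqueNum (hS : S ⊆ inducedEdges G U) (hSTC : STC G U S)
    {v : V} (hv : v ∈ U) :
    (fromEdgeSet (S : Set (Sym2 V))).degree v < G.cliqueNum := by
  have hcard := IsClique.card_le_cliqueNum (tc := hSTC.isClique_insert_neighborFinset hS hv)
  rwa [card_insert_of_notMem (by simp), ← degree, Nat.add_one_le_iff] at hcard

lemma STC.two_mul_card_add_card_le (hS : S ⊆ inducedEdges G U) (hSTC : STC G U S) :
    2 * #S + #U ≤ #U * G.cliqueNum :=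
  calc 2 * #S + #U = ∑ v ∈ U, ((fromEdgeSet (S : Set (Sym2 V))).degree v + 1) := by
        rw [sum_add_distrib, sum_degree_fromEdgeSet hS, card_eq_sum_ones U]
    _ ≤ ∑ _v ∈ U, G.cliqueNum :=
        sum_le_sum fun _ hv => hSTC.degree_fromEdgeSet_lt_cliqueNum hS hv
    _ = #U * G.cliqueNum := by rw [sum_const, smul_eq_mul]

lemma SimpleGraph.IsClique.neighborFinset_fromEdgeSet_inducedEdges (hK : G.IsClique (K : Set V))
    {v : V} (hv : v ∈ K) :
    (fromEdgeSet (inducedEdges G K : Set (Sym2 V))).neighborFinset v = K.erase v := by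
  ext w
  simp only [mem_neighborFinset, fromEdgeSet_adj, mem_coe, mk_mem_inducedEdges, mem_erase]
  exact ⟨fun h => ⟨h.2.symm, h.1.2.2⟩, fun h => ⟨⟨hK hv h.2 h.1.symm, hv, h.2⟩, h.1.symm⟩⟩

lemma SimpleGraph.IsClique.two_mul_card_inducedEdges_add_card (hK : G.IsClique (K : Set V)) :
    2 * #(inducedEdges G K) + #K = #K * #K :=
  calc 2 * #(inducedEdges G K) + #K
        = ∑ v ∈ K, ((fromEdgeSet (inducedEdges G K : Set (Sym2 V))).degree v + 1) := by
        rw [sum_add_distrib, sum_degree_fromEdgeSet subset_rfl, card_eq_sum_ones K]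
    _ = ∑ _v ∈ K, #K := sum_congr rfl fun v hv => by
        rw [degree, hK.neighborFinset_fromEdgeSet_inducedEdges hv, card_erase_add_one hv]
    _ = #K * #K := by rw [sum_const, smul_eq_mul]

lemma score_zero : score G U S 0 = #S / #U := by
  simp [score]

lemma STC.score_zero_le (hU : U.Nonempty) (hS : S ⊆ inducedEdges G U) (hSTC : STC G U S) :
    score G U S 0 ≤ ((G.cliqueNum : ℝ) - 1) / 2 := by
  have hcount : (2 * #S + #U : ℝ) ≤ #U * G.cliqueNum := by
    exact_mod_cast hSTC.two_mul_card_add_card_le hS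
  rw [score_zero, div_le_div_iff₀ (Nat.cast_pos.mpr hU.card_pos) two_pos]
  linarith

lemma SimpleGraph.IsClique.score_zero_inducedEdges (hK : G.IsClique (K : Set V))
    (hne : K.Nonempty) : score G K (inducedEdges G K) 0 = ((#K : ℝ) - 1) / 2 := by
  have hcount : (2 * #(inducedEdges G K) + #K : ℝ) = #K * #K := by
    exact_mod_cast hK.two_mul_card_inducedEdges_add_card
  rw [score_zero, div_eq_div_iff (Nat.cast_ne_zero.mpr hne.card_pos.ne') two_ne_zero]
  linarith

end

theorem stmt3 (G : SimpleGraph V) [DecidableRel G.Adj] [Nonempty V] :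
    IsGreatest {q : ℝ | ∃ (U : Finset V) (S : Finset (Sym2 V)),
        U.Nonempty ∧ S ⊆ inducedEdges G U ∧ STC G U S ∧ q = score G U S 0}
      (((G.cliqueNum : ℝ) - 1) / 2) := by
  obtain ⟨K, hK⟩ := G.exists_isNClique_cliqueNum
  have hω : 1 ≤ G.cliqueNum := by
    obtain ⟨v⟩ := ‹Nonempty V›
    simpa using IsClique.card_le_cliqueNum (G := G) (t := {v}) (tc := by simp)
  have hKne : K.Nonempty := card_pos.mp (hK.card_eq ▸ hω)
  refine ⟨⟨K, inducedEdges G K, hKne, subset_rfl,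
    fun _ _ _ hx _ hz hxz _ _ => hK.isClique hx hz hxz, ?_⟩, ?_⟩
  · rw [hK.isClique.score_zero_inducedEdges hKne, hK.card_eq]
  · rintro q ⟨U, S, hU, hS, hSTC, rfl⟩
    exact hSTC.score_zero_le hU hS
end
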